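/- Consider the almost paracontact metric Walker structure on ℝ³ with ξ₂ ≡ 1, ξ₃ ≡ 0 and an arbitrary smooth function ξ₁ : ℝ³ → ℝ (so ξ = ξ₁∂x + ∂y, η = dy + ξ₁ dz, φ∂x = −∂x, φ∂y = ξ₁∂x, φ∂z = −f∂x − ξ₁∂y + ∂z). Then the structure is paracosymplectic, i.e. F(∂i,∂j,∂k) = 0 at every point for all coordinate fields (equivalently ∇φ = 0, the class G₀), if and only if (ξ₁)_x ≡ 0, (ξ₁)_y ≡ 0 and 2(ξ₁)_z + ξ₁ f_x + f_y ≡ 0 on ℝ³ (Theorem 4.4(ii)). -/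

import Mathlib

open Real

/-- Points of the Walker manifold `M = ℝ³` with coordinates `(x,y,z)`. -/
abbrev Pt : Type := ℝ × ℝ × ℝ

/-- Vector fields on `ℝ³`, given by their components in the frame `∂x, ∂y, ∂z`. -/
abbrev VF : Type := Pt → Pt

/-- Partial derivative ∂/∂x. -/
noncomputable def pdx (F : Pt → ℝ) (p : Pt) : ℝ := fderiv ℝ F p ((1:ℝ), (0:ℝ), (0:ℝ))

/-- Partial derivative ∂/∂y. -/
noncomputable def pdy (F : Pt → ℝ) (p : Pt) : ℝ := fderiv ℝ F p ((0:ℝ), (1:ℝ), (0:ℝ))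

/-- Partial derivative ∂/∂z. -/
noncomputable def pdz (F : Pt → ℝ) (p : Pt) : ℝ := fderiv ℝ F p ((0:ℝ), (0:ℝ), (1:ℝ))

/-- Directional derivative of a scalar function along a vector field. -/
noncomputable def dd (X : VF) (F : Pt → ℝ) (p : Pt) : ℝ := fderiv ℝ F p (X p)

/-- Components of a tangent vector. -/
def c1 (v : Pt) : ℝ := v.1
def c2 (v : Pt) : ℝ := v.2.1
def c3 (v : Pt) : ℝ := v.2.2

/-- The coordinate vector fields `∂x, ∂y, ∂z`. -/
noncomputable def E : Fin 3 → VF :=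
  ![fun _ => ((1:ℝ), (0:ℝ), (0:ℝ)), fun _ => ((0:ℝ), (1:ℝ), (0:ℝ)),
    fun _ => ((0:ℝ), (0:ℝ), (1:ℝ))]

/-- The Walker metric with `ε = 1`: `g(∂x,∂z) = g(∂z,∂x) = 1`, `g(∂y,∂y) = 1`,
`g(∂z,∂z) = f`, all other components zero. -/
noncomputable def gm (f : Pt → ℝ) (X Y : VF) (p : Pt) : ℝ :=
  c1 (X p) * c3 (Y p) + c3 (X p) * c1 (Y p) + c2 (X p) * c2 (Y p)
    + f p * c3 (X p) * c3 (Y p)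

/-- The Levi-Civita connection of the Walker metric:
`∇_{∂x}∂z = ∇_{∂z}∂x = (1/2) f_x ∂x`, `∇_{∂y}∂z = ∇_{∂z}∂y = (1/2) f_y ∂x`,
`∇_{∂z}∂z = (1/2)(f f_x + f_z) ∂x - (1/2) f_y ∂y - (1/2) f_x ∂z`, all other covariant
derivatives of coordinate fields zero, extended by `C^∞`-linearity below and the
Leibniz rule above. -/
noncomputable def cov (f : Pt → ℝ) (X Y : VF) : VF := fun p =>
  ( dd X (fun q => c1 (Y q)) p
      + (1/2) * pdx f p * (c1 (X p) * c3 (Y p) + c3 (X p) * c1 (Y p))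
      + (1/2) * pdy f p * (c2 (X p) * c3 (Y p) + c3 (X p) * c2 (Y p))
      + (1/2) * (f p * pdx f p + pdz f p) * (c3 (X p) * c3 (Y p)),
    dd X (fun q => c2 (Y q)) p - (1/2) * pdy f p * (c3 (X p) * c3 (Y p)),
    dd X (fun q => c3 (Y q)) p - (1/2) * pdx f p * (c3 (X p) * c3 (Y p)) )

/-- Lie bracket of vector fields on `ℝ³`. -/
noncomputable def brk (X Y : VF) : VF := fun p =>
  ( dd X (fun q => c1 (Y q)) p - dd Y (fun q => c1 (X q)) p,
    dd X (fun q => c2 (Y q)) p - dd Y (fun q => c2 (X q)) p,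
    dd X (fun q => c3 (Y q)) p - dd Y (fun q => c3 (X q)) p )

/-- The `(1,1)`-tensor `φ` of the almost paracontact metric Walker structure:
`φ∂x = -ξ₂∂x + ξ₃∂y`, `φ∂y = (ξ₁ + fξ₃)∂x - ξ₃∂z`, `φ∂z = -fξ₂∂x - ξ₁∂y + ξ₂∂z`. -/
noncomputable def phiV (f ξ₁ ξ₂ ξ₃ : Pt → ℝ) (X : VF) : VF := fun p =>
  ( -ξ₂ p * c1 (X p) + (ξ₁ p + f p * ξ₃ p) * c2 (X p) - f p * ξ₂ p * c3 (X p),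
    ξ₃ p * c1 (X p) - ξ₁ p * c3 (X p),
    -ξ₃ p * c2 (X p) + ξ₂ p * c3 (X p) )

/-- The 1-form `η = ξ₃ dx + ξ₂ dy + (ξ₁ + fξ₃) dz`. -/
noncomputable def etaV (f ξ₁ ξ₂ ξ₃ : Pt → ℝ) (X : VF) (p : Pt) : ℝ :=
  ξ₃ p * c1 (X p) + ξ₂ p * c2 (X p) + (ξ₁ p + f p * ξ₃ p) * c3 (X p)

/-- The structure tensor `F(X,Y,Z) = g((∇_X φ)Y, Z)`, `(∇_X φ)Y = ∇_X(φY) - φ(∇_X Y)`. -/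
noncomputable def Ften (f ξ₁ ξ₂ ξ₃ : Pt → ℝ) (X Y Z : VF) (p : Pt) : ℝ :=
  gm f (fun q => cov f X (phiV f ξ₁ ξ₂ ξ₃ Y) q - phiV f ξ₁ ξ₂ ξ₃ (cov f X Y) q) Z p

/-- The fundamental 2-form `Φ(X,Y) = g(φX, Y)`. -/
noncomputable def Phi2 (f ξ₁ ξ₂ ξ₃ : Pt → ℝ) (X Y : VF) : Pt → ℝ :=
  gm f (phiV f ξ₁ ξ₂ ξ₃ X) Y

/-- `dη(∂i,∂j) = (1/2)(∂i(η(∂j)) - ∂j(η(∂i)))` on coordinate fields. -/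
noncomputable def deta (f ξ₁ ξ₂ ξ₃ : Pt → ℝ) (i j : Fin 3) (p : Pt) : ℝ :=
  (1/2) * (dd (E i) (etaV f ξ₁ ξ₂ ξ₃ (E j)) p - dd (E j) (etaV f ξ₁ ξ₂ ξ₃ (E i)) p)

/-- `dη(X,Y) = (1/2)(X(η(Y)) - Y(η(X)) - η([X,Y]))` on general vector fields. -/
noncomputable def detaB (f ξ₁ ξ₂ ξ₃ : Pt → ℝ) (X Y : VF) (p : Pt) : ℝ :=
  (1/2) * (dd X (etaV f ξ₁ ξ₂ ξ₃ Y) p - dd Y (etaV f ξ₁ ξ₂ ξ₃ X) p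
    - etaV f ξ₁ ξ₂ ξ₃ (brk X Y) p)

/-- The Nijenhuis tensor `N(X,Y) = φ²[X,Y] + [φX,φY] - φ[φX,Y] - φ[X,φY]`. -/
noncomputable def nij (f ξ₁ ξ₂ ξ₃ : Pt → ℝ) (X Y : VF) : VF := fun p =>
  phiV f ξ₁ ξ₂ ξ₃ (phiV f ξ₁ ξ₂ ξ₃ (brk X Y)) p
    + brk (phiV f ξ₁ ξ₂ ξ₃ X) (phiV f ξ₁ ξ₂ ξ₃ Y) p
    - phiV f ξ₁ ξ₂ ξ₃ (brk (phiV f ξ₁ ξ₂ ξ₃ X) Y) p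
    - phiV f ξ₁ ξ₂ ξ₃ (brk X (phiV f ξ₁ ξ₂ ξ₃ Y)) p

/-- The curvature tensor, with the paper's sign convention
`R(X,Y)Z = ∇_{[X,Y]}Z - ∇_X∇_Y Z + ∇_Y∇_X Z`. -/
noncomputable def Rop (f : Pt → ℝ) (X Y Z : VF) : VF := fun p =>
  cov f (brk X Y) Z p - cov f X (cov f Y Z) p + cov f Y (cov f X Z) p

/-- Second partial derivatives of `f`. -/
noncomputable def fxx (f : Pt → ℝ) : Pt → ℝ := pdx (pdx f)
noncomputable def fxy (f : Pt → ℝ) : Pt → ℝ := pdy (pdx f)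
noncomputable def fyy (f : Pt → ℝ) : Pt → ℝ := pdy (pdy f)

/-- The Ricci tensor of the Walker metric: `ρ(∂x,∂z) = ρ(∂z,∂x) = (1/2) f_xx`,
`ρ(∂y,∂z) = ρ(∂z,∂y) = (1/2) f_xy`, `ρ(∂z,∂z) = (1/2)(f f_xx - f_yy)`, all other
components zero, extended tensorially. -/
noncomputable def rhoT (f : Pt → ℝ) (X Y : VF) (p : Pt) : ℝ :=
  (1/2) * fxx f p * (c1 (X p) * c3 (Y p) + c3 (X p) * c1 (Y p))
    + (1/2) * fxy f p * (c2 (X p) * c3 (Y p) + c3 (X p) * c2 (Y p))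
    + (1/2) * (f p * fxx f p - fyy f p) * (c3 (X p) * c3 (Y p))

/-- The Ricci operator: `Q∂x = (1/2)f_xx ∂x`, `Q∂y = (1/2)f_xy ∂x`,
`Q∂z = -(1/2)f_yy ∂x + (1/2)f_xy ∂y + (1/2)f_xx ∂z`. -/
noncomputable def Qop (f : Pt → ℝ) (X : VF) : VF := fun p =>
  ( (1/2) * fxx f p * c1 (X p) + (1/2) * fxy f p * c2 (X p) - (1/2) * fyy f p * c3 (X p),
    (1/2) * fxy f p * c3 (X p),
    (1/2) * fxx f p * c3 (X p) )

/-- `dΦ(∂x,∂y,∂z) = ∂x(Φ(∂y,∂z)) - ∂y(Φ(∂x,∂z)) + ∂z(Φ(∂x,∂y))`. -/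
noncomputable def dPhi (f ξ₁ ξ₂ ξ₃ : Pt → ℝ) (p : Pt) : ℝ :=
  pdx (Phi2 f ξ₁ ξ₂ ξ₃ (E 1) (E 2)) p - pdy (Phi2 f ξ₁ ξ₂ ξ₃ (E 0) (E 2)) p
    + pdz (Phi2 f ξ₁ ξ₂ ξ₃ (E 0) (E 1)) p

/-- `(η∧Φ)(∂x,∂y,∂z) = η(∂x)Φ(∂y,∂z) - η(∂y)Φ(∂x,∂z) + η(∂z)Φ(∂x,∂y)`. -/
noncomputable def etaWedgePhi (f ξ₁ ξ₂ ξ₃ : Pt → ℝ) (p : Pt) : ℝ :=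
  etaV f ξ₁ ξ₂ ξ₃ (E 0) p * Phi2 f ξ₁ ξ₂ ξ₃ (E 1) (E 2) p
    - etaV f ξ₁ ξ₂ ξ₃ (E 1) p * Phi2 f ξ₁ ξ₂ ξ₃ (E 0) (E 2) p
    + etaV f ξ₁ ξ₂ ξ₃ (E 2) p * Phi2 f ξ₁ ξ₂ ξ₃ (E 0) (E 1) p

/-- The constant function `0`. -/
noncomputable def zeroF : Pt → ℝ := fun _ => 0
/-- The constant function `1`. -/
noncomputable def oneF : Pt → ℝ := fun _ => 1
/-- The constant function `-1`. -/
noncomputable def negOneF : Pt → ℝ := fun _ => -1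
/-! For `ξ₂ ≡ 1`, `ξ₃ ≡ 0` a direct computation in the coordinate frame gives
`∇_{∂i}φ = λᵢ A`, where `A∂x = 0`, `A∂y = ∂x`, `A∂z = -∂y` and
`λ = ((ξ₁)_x, (ξ₁)_y, (ξ₁)_z + (ξ₁ f_x + f_y)/2)`. Hence `F(∂i,∂j,∂k) = λᵢ g(A∂j,∂k)`, and since
`g(A∂y,∂z) = 1`, the tensor `F` vanishes exactly when every `λᵢ` does. -/

noncomputable def covPhiCoeff (f ξ₁ : Pt → ℝ) : Fin 3 → Pt → ℝ :=
  ![pdx ξ₁, pdy ξ₁, fun p => pdz ξ₁ p + (ξ₁ p * pdx f p + pdy f p) / 2]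

lemma covDeriv_phi_coord (f ξ₁ : Pt → ℝ) (i j : Fin 3) (p : Pt) :
    cov f (E i) (phiV f ξ₁ oneF zeroF (E j)) p - phiV f ξ₁ oneF zeroF (cov f (E i) (E j)) p
      = covPhiCoeff f ξ₁ i p • ![(0, 0, 0), (1, 0, 0), (0, -1, 0)] j := by
  fin_cases i <;> fin_cases j <;> ext <;>
    simp [covPhiCoeff, cov, phiV, dd, c1, c2, c3, oneF, zeroF, E, pdx, pdy, pdz] <;>
    ring

lemma Ften_coord (f ξ₁ : Pt → ℝ) (i j k : Fin 3) (p : Pt) :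
    Ften f ξ₁ oneF zeroF (E i) (E j) (E k) p
      = covPhiCoeff f ξ₁ i p * !![0, 0, 0; 0, 0, 1; 0, -1, 0] j k := by
  simp only [Ften, gm, covDeriv_phi_coord]
  fin_cases j <;> fin_cases k <;> simp [E, c1, c2, c3]

lemma Ften_coord_eq_zero_iff (f ξ₁ : Pt → ℝ) :
    (∀ (i j k : Fin 3) (p : Pt), Ften f ξ₁ oneF zeroF (E i) (E j) (E k) p = 0) ↔
      ∀ (i : Fin 3) (p : Pt), covPhiCoeff f ξ₁ i p = 0 := by
  simp only [Ften_coord]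
  refine ⟨fun h i p => by simpa using h i 1 2 p, fun h i j k p => by simp [h i p]⟩

lemma covPhiCoeff_eq_zero_iff (f ξ₁ : Pt → ℝ) :
    (∀ (i : Fin 3) (p : Pt), covPhiCoeff f ξ₁ i p = 0) ↔
      (∀ p : Pt, pdx ξ₁ p = 0) ∧ (∀ p : Pt, pdy ξ₁ p = 0) ∧
        (∀ p : Pt, 2 * pdz ξ₁ p + ξ₁ p * pdx f p + pdy f p = 0) := by
  have coeff_two (p : Pt) :
      2 * covPhiCoeff f ξ₁ 2 p = 2 * pdz ξ₁ p + ξ₁ p * pdx f p + pdy f p := by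
    simp only [covPhiCoeff, Matrix.cons_val]
    ring
  constructor
  · intro h
    exact ⟨h 0, h 1, fun p => by rw [← coeff_two, h 2 p, mul_zero]⟩
  · rintro ⟨hx, hy, hz⟩ i p
    match i with
    | 0 => exact hx p
    | 1 => exact hy p
    | 2 => linarith [coeff_two p, hz p]

theorem paracosymplectic_iff_general (f ξ₁ : Pt → ℝ) :
    (∀ (i j k : Fin 3) (p : Pt), Ften f ξ₁ oneF zeroF (E i) (E j) (E k) p = 0) ↔
    ((∀ p : Pt, pdx ξ₁ p = 0) ∧ (∀ p : Pt, pdy ξ₁ p = 0) ∧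
      (∀ p : Pt, 2 * pdz ξ₁ p + ξ₁ p * pdx f p + pdy f p = 0)) :=
  (Ften_coord_eq_zero_iff f ξ₁).trans (covPhiCoeff_eq_zero_iff f ξ₁)

/-- Theorem 4.4(ii): the structure with `ξ₂ ≡ 1`, `ξ₃ ≡ 0` is paracosymplectic
(`F ≡ 0`, the class `G₀`) iff `(ξ₁)_x ≡ 0`, `(ξ₁)_y ≡ 0` and
`2(ξ₁)_z + ξ₁ f_x + f_y ≡ 0`. -/
theorem paracosymplectic_iff (f ξ₁ : Pt → ℝ)
    (hf : ContDiff ℝ (⊤ : ℕ∞) f) (h1 : ContDiff ℝ (⊤ : ℕ∞) ξ₁) :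
    (∀ (i j k : Fin 3) (p : Pt), Ften f ξ₁ oneF zeroF (E i) (E j) (E k) p = 0) ↔
    ((∀ p : Pt, pdx ξ₁ p = 0) ∧ (∀ p : Pt, pdy ξ₁ p = 0) ∧
      (∀ p : Pt, 2 * pdz ξ₁ p + ξ₁ p * pdx f p + pdy f p = 0)) :=
  paracosymplectic_iff_general f ξ₁
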